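/- Let S be an ovoidal subspace of a generalised 2n-gon. If x and y are points of S with d(x,y) < 2n, then every element on the unique geodesic joining x and y belongs to S. -/

import Mathlib

open SimpleGraph

/-- The incidence graph of a point-line geometry, on vertex set `P ⊕ L`. -/
def incGraph {P L : Type*} (inc : P → L → Prop) : SimpleGraph (P ⊕ L) where
  Adj x y := (∃ p l, x = Sum.inl p ∧ y = Sum.inr l ∧ inc p l) ∨
             (∃ p l, x = Sum.inr l ∧ y = Sum.inl p ∧ inc p l)
  symm := by
    constructor
    rintro x y (⟨p, l, rfl, rfl, h⟩ | ⟨p, l, rfl, rfl, h⟩)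
    · exact Or.inr ⟨p, l, rfl, rfl, h⟩
    · exact Or.inl ⟨p, l, rfl, rfl, h⟩
  loopless := by
    constructor
    rintro x (⟨p, l, rfl, h, _⟩ | ⟨p, l, rfl, h, _⟩) <;> cases h

/-- A (weak) generalised `n`-gon: the incidence graph is connected, has diameter `n` and
girth `2n`. -/
structure IsGenPolygon {P L : Type*} (n : ℕ) (inc : P → L → Prop) : Prop where
  connected : (incGraph inc).Connected
  dist_le : ∀ x y : P ⊕ L, (incGraph inc).dist x y ≤ n
  exists_dist_eq : ∃ x y : P ⊕ L, (incGraph inc).dist x y = n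
  girth_eq : (incGraph inc).girth = (2 * n : ℕ)

/-- Thickness: every point is on at least three lines and every line carries at least three
points. -/
def IsThick {P L : Type*} (inc : P → L → Prop) : Prop :=
  (∀ p : P, ∃ l₁ l₂ l₃ : L, inc p l₁ ∧ inc p l₂ ∧ inc p l₃ ∧ l₁ ≠ l₂ ∧ l₁ ≠ l₃ ∧ l₂ ≠ l₃) ∧
  (∀ l : L, ∃ p₁ p₂ p₃ : P, inc p₁ l ∧ inc p₂ l ∧ inc p₃ l ∧ p₁ ≠ p₂ ∧ p₁ ≠ p₃ ∧ p₂ ≠ p₃)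

/-- The geometry has parameters `(s, t)`: each line carries `s + 1` points and each point is
on `t + 1` lines. -/
def HasParams {P L : Type*} (inc : P → L → Prop) (s t : ℕ) : Prop :=
  (∀ l : L, Nat.card {p : P // inc p l} = s + 1) ∧
  (∀ p : P, Nat.card {l : L // inc p l} = t + 1)

/-- A collineation: a pair of permutations of the points and the lines preserving
incidence. -/
def IsCollineation {P L : Type*} (inc : P → L → Prop) (θP : Equiv.Perm P)
    (θL : Equiv.Perm L) : Prop :=
  ∀ p l, inc p l ↔ inc (θP p) (θL l)

/-- Two chambers `{p, l}` and `{p', l'}` of a generalised `m`-gon are opposite. -/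
def OppChambers {P L : Type*} (inc : P → L → Prop) (m : ℕ)
    (p p' : P) (l l' : L) : Prop :=
  ((incGraph inc).dist (Sum.inl p) (Sum.inl p') = m ∧
    (incGraph inc).dist (Sum.inr l) (Sum.inr l') = m) ∨
  ((incGraph inc).dist (Sum.inl p) (Sum.inr l') = m ∧
    (incGraph inc).dist (Sum.inr l) (Sum.inl p') = m)

/-- A collineation is domestic if it maps no chamber to an opposite chamber. -/
def IsDomesticColl {P L : Type*} (inc : P → L → Prop) (m : ℕ) (θP : Equiv.Perm P)
    (θL : Equiv.Perm L) : Prop :=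
  ¬ ∃ p l, inc p l ∧ OppChambers inc m p (θP p) l (θL l)

/-- A subspace of a point-line geometry: closed under lines joining distinct collinear
points of the subspace, and containing all points of each of its lines. -/
def IsSubspace {P L : Type*} (inc : P → L → Prop) (S : Set (P ⊕ L)) : Prop :=
  (∀ p q : P, p ≠ q → Sum.inl p ∈ S → Sum.inl q ∈ S →
    ∀ l : L, inc p l → inc q l → Sum.inr l ∈ S) ∧
  (∀ l : L, Sum.inr l ∈ S → ∀ p : P, inc p l → Sum.inl p ∈ S)

/-- An ovoidal subspace of a generalised `2n`-gon: a subspace such that every element is at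
distance at most `n` from the subspace, and every element at distance less than `n` from
the subspace is at minimal distance from a unique element of the subspace. -/
def IsOvoidal {P L : Type*} (inc : P → L → Prop) (n : ℕ) (S : Set (P ⊕ L)) : Prop :=
  IsSubspace inc S ∧
  (∀ x : P ⊕ L, ∃ y ∈ S, (incGraph inc).dist x y ≤ n) ∧
  (∀ x : P ⊕ L, (∃ y ∈ S, (incGraph inc).dist x y < n) →
    ∃! z : P ⊕ L, z ∈ S ∧ ∀ y ∈ S, (incGraph inc).dist x z ≤ (incGraph inc).dist x y)

/-! The incidence graph of a generalised `2n`-gon has girth `4n`, so a geodesic of length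
`< 2n` is unique and its elements are determined by their distance to one end. By induction on
`d(u, v) < 2n`, every geodesic between elements `u, v` of `S` lies in `S`: it suffices to find one
interior element of the geodesic in `S`, which splits it into two shorter geodesics. If an end
is a line, its neighbour on the geodesic is a point of that line. If both ends are points,
`d(u, v) = 2k` and the midpoint `m` is within distance `k < n` of `S`. Its nearest element `z₀` of
`S` is unique, hence at distance `j < k`; if `j > 0`, the geodesic from `m` to `z₀` leaves `m`
through an edge not pointing to `u`, say, and the girth bound gives `d(u, z₀) = k + j < 2k`, so
`m ∈ S` by induction. -/

namespace SimpleGraph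

variable {V : Type*} {G : SimpleGraph V} {u v x y z z' m a b : V}

lemma Connected.exists_adj_dist_add_one_eq (hc : G.Connected) (h : u ≠ v) :
    ∃ a, G.Adj u a ∧ G.dist a v + 1 = G.dist u v := by
  obtain ⟨p, hp⟩ := hc.exists_walk_length_eq_dist u v
  have hnil : ¬ p.Nil := by
    rw [Walk.not_nil_iff_lt_length, hp]
    exact hc.pos_dist_of_ne h
  have hadj := p.adj_snd hnil
  have htail := dist_le p.tail
  have hlen := p.length_tail_add_one hnil
  have htri := hc.dist_triangle (u := u) (v := p.snd) (w := v)
  rw [dist_eq_one_iff_adj.mpr hadj] at htri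
  exact ⟨p.snd, hadj, by omega⟩

lemma Walk.dist_add_dist_le_length (p : G.Walk u v) (hx : x ∈ p.support) :
    G.dist u x + G.dist x v ≤ p.length := by
  classical
  calc G.dist u x + G.dist x v
      ≤ (p.takeUntil x hx).length + (p.dropUntil x hx).length :=
        add_le_add (dist_le _) (dist_le _)
    _ = p.length := by rw [← Walk.length_append, Walk.take_spec]

lemma girth_le_length_add_two (hma : G.Adj m a) (hmb : G.Adj m b) (hab : a ≠ b)
    (W : G.Walk a b) (hm : m ∉ W.support) : G.girth ≤ W.length + 2 := by
  classical
  have hm' : m ∉ W.bypass.support := fun h => hm (W.support_bypass_subset_support h)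
  have hcycle : (Walk.cons hma (W.bypass.concat hmb.symm)).IsCycle := by
    refine (Walk.cons_isCycle_iff _ _).mpr ⟨W.bypass_isPath.concat hm' _, fun he => ?_⟩
    rw [Walk.edges_concat, List.concat_eq_append, List.mem_append, List.mem_singleton,
      Sym2.eq_iff] at he
    rcases he with he | ⟨hmb', -⟩ | ⟨-, hab'⟩
    · exact hm' (W.bypass.fst_mem_support_of_mem_edges he)
    · exact hmb.ne hmb'
    · exact hab hab'
  calc G.girth ≤ W.bypass.length + 2 := by simpa using girth_le_length hcycle
    _ ≤ W.length + 2 := by grw [W.length_bypass_le_length]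

/-- Geodesics from `m` to `x` and to `y` leaving `m` by different edges close up, through a
geodesic from `x` to `y` avoiding `m`, to a cycle. -/
lemma Connected.girth_le_dist_add_dist_add_dist (hc : G.Connected) (hma : G.Adj m a)
    (hmb : G.Adj m b) (hab : a ≠ b) (hax : G.dist a x + 1 = G.dist m x)
    (hby : G.dist b y + 1 = G.dist m y) (hxy : G.dist x y < G.dist m x + G.dist m y) :
    G.girth ≤ G.dist m x + G.dist x y + G.dist m y := by
  obtain ⟨p, hp⟩ := hc.exists_walk_length_eq_dist a x
  obtain ⟨q, hq⟩ := hc.exists_walk_length_eq_dist x y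
  obtain ⟨r, hr⟩ := hc.exists_walk_length_eq_dist y b
  have ham : G.dist a m = 1 := dist_eq_one_iff_adj.mpr hma.symm
  have hmb1 : G.dist m b = 1 := dist_eq_one_iff_adj.mpr hmb
  have hcomm : G.dist y b = G.dist b y := dist_comm
  have hm : m ∉ (p.append (q.append r)).support := by
    simp only [Walk.mem_support_append_iff, not_or]
    refine ⟨fun h => ?_, fun h => ?_, fun h => ?_⟩
    · have := p.dist_add_dist_le_length h
      omega
    · have := q.dist_add_dist_le_length h
      rw [dist_comm (u := x) (v := m)] at this
      omega
    · have := r.dist_add_dist_le_length h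
      rw [dist_comm (u := y) (v := m)] at this
      omega
  have := girth_le_length_add_two hma hmb hab _ hm
  simp only [Walk.length_append] at this
  omega

lemma Connected.eq_of_adj_of_dist_add_one_eq (hc : G.Connected) (hma : G.Adj m a)
    (hmb : G.Adj m b) (ha : G.dist a x + 1 = G.dist m x) (hb : G.dist b x + 1 = G.dist m x)
    (hg : 2 * G.dist m x < G.girth) : a = b := by
  by_contra hab
  have := hc.girth_le_dist_add_dist_add_dist hma hmb hab ha hb (by rw [dist_self]; omega)
  simp only [dist_self] at this
  omega

lemma Connected.dist_eq_add_of_adj_ne (hc : G.Connected) (hma : G.Adj m a) (hmb : G.Adj m b)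
    (hab : a ≠ b) (haz : G.dist a z + 1 = G.dist m z) (hbu : G.dist b u + 1 = G.dist m u)
    (hg : 2 * (G.dist m u + G.dist m z) ≤ G.girth) :
    G.dist u z = G.dist u m + G.dist m z := by
  have htri := hc.dist_triangle (u := u) (v := m) (w := z)
  have hum : G.dist u m = G.dist m u := dist_comm
  by_contra hne
  have := hc.girth_le_dist_add_dist_add_dist hmb hma hab.symm hbu haz (by omega)
  omega

lemma Connected.exists_dist_eq_of_le (hc : G.Connected) {i : ℕ} (hi : i ≤ G.dist u v) :
    ∃ z, G.dist u z = i ∧ G.dist u z + G.dist z v = G.dist u v := by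
  induction i with
  | zero => exact ⟨u, by simp⟩
  | succ i ih =>
    obtain ⟨z, hzi, hz⟩ := ih (by omega)
    have hzv : z ≠ v := by
      rintro rfl
      simp only [dist_self] at hz
      omega
    obtain ⟨s, hzs, hs⟩ := hc.exists_adj_dist_add_one_eq hzv
    have hus := hc.dist_triangle (u := u) (v := z) (w := s)
    have huv := hc.dist_triangle (u := u) (v := s) (w := v)
    rw [dist_eq_one_iff_adj.mpr hzs] at hus
    exact ⟨s, by omega, by omega⟩

lemma Connected.eq_of_dist_add_dist_eq_of_dist_eq (hc : G.Connected)
    (hg : 2 * G.dist u v < G.girth) (hz : G.dist u z + G.dist z v = G.dist u v)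
    (hz' : G.dist u z' + G.dist z' v = G.dist u v) (h : G.dist u z = G.dist u z') : z = z' := by
  induction hi : G.dist u z generalizing z z' with
  | zero =>
    rw [hi, eq_comm, hc.dist_eq_zero_iff] at h
    rw [← h, ← hc.dist_eq_zero_iff.mp hi]
  | succ i ih =>
    have pred : ∀ w, G.dist u w + G.dist w v = G.dist u v → G.dist u w = i + 1 →
        ∃ p, G.Adj p w ∧ G.dist u p + G.dist p v = G.dist u v ∧ G.dist u p = i ∧
          G.dist w v + 1 = G.dist p v := by
      intro w hw hwi
      have hwu : w ≠ u := by
        rintro rfl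
        simp at hwi
      obtain ⟨p, hwp, hp⟩ := hc.exists_adj_dist_add_one_eq hwu
      have hpv := hc.dist_triangle (u := p) (v := w) (w := v)
      have huv := hc.dist_triangle (u := u) (v := p) (w := v)
      rw [dist_eq_one_iff_adj.mpr hwp.symm] at hpv
      rw [dist_comm (u := p), dist_comm (u := w)] at hp
      exact ⟨p, hwp.symm, by omega, by omega, by omega⟩
    obtain ⟨p, hpz, hp, hpi, hzp⟩ := pred z hz hi
    obtain ⟨p', hpz', hp', hpi', hzp'⟩ := pred z' hz' (h ▸ hi)
    obtain rfl : p = p' := ih hp hp' (hpi.trans hpi'.symm) hpi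
    exact hc.eq_of_adj_of_dist_add_one_eq hpz hpz' hzp hzp' (by omega)

lemma Connected.dist_add_dist_eq_of_le (hc : G.Connected) (hg : 2 * G.dist u v < G.girth)
    (hm : G.dist u m + G.dist m v = G.dist u v) (hz : G.dist u z + G.dist z v = G.dist u v)
    (hzm : G.dist u z ≤ G.dist u m) : G.dist u z + G.dist z m = G.dist u m := by
  obtain ⟨z', hz'i, hz'⟩ := hc.exists_dist_eq_of_le hzm
  have htri := hc.dist_triangle (u := z') (v := m) (w := v)
  have htri' := hc.dist_triangle (u := u) (v := z') (w := v)
  obtain rfl : z = z' := hc.eq_of_dist_add_dist_eq_of_dist_eq hg hz (by omega) hz'i.symm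
  exact hz'

lemma Connected.dist_add_dist_eq_of_ge (hc : G.Connected) (hg : 2 * G.dist u v < G.girth)
    (hm : G.dist u m + G.dist m v = G.dist u v) (hz : G.dist u z + G.dist z v = G.dist u v)
    (hmz : G.dist u m ≤ G.dist u z) : G.dist m z + G.dist z v = G.dist m v := by
  have h := hc.dist_add_dist_eq_of_le (u := v) (v := u) (m := m) (z := z)
  simp only [dist_comm (u := v), dist_comm (v := u)] at h
  rw [dist_comm (u := m), add_comm]
  exact h (by omega) (by omega) (by omega) (by omega)

def IsConvexBelow (G : SimpleGraph V) (S : Set V) (D : ℕ) : Prop :=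
  ∀ u ∈ S, ∀ v ∈ S, G.dist u v < D → ∀ z, G.dist u z + G.dist z v = G.dist u v → z ∈ S

lemma IsConvexBelow.mono {S : Set V} {D D' : ℕ} (h : G.IsConvexBelow S D) (hD : D' ≤ D) :
    G.IsConvexBelow S D' :=
  fun u hu v hv huv => h u hu v hv (huv.trans_le hD)

end SimpleGraph

section IncidenceGeometry

variable {P L : Type*} {inc : P → L → Prop}

local notation "δ" => SimpleGraph.dist (incGraph inc)

def incGraphColoring (inc : P → L → Prop) : (incGraph inc).Coloring Bool :=
  Coloring.mk Sum.isLeft fun h => by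
    rcases h with ⟨p, l, rfl, rfl, -⟩ | ⟨p, l, rfl, rfl, -⟩ <;> simp

lemma even_dist_inl_inl (x y : P) : Even (δ (.inl x) (.inl y)) := by
  by_cases h : (incGraph inc).Reachable (.inl x) (.inl y)
  · obtain ⟨p, hp⟩ := h.exists_walk_length_eq_dist
    rw [← hp, (incGraphColoring inc).even_length_iff_congr]
    rfl
  · simp [dist_eq_zero_of_not_reachable h]

lemma IsSubspace.mem_of_adj_inr {S : Set (P ⊕ L)} (hS : IsSubspace inc S) {l : L} {z : P ⊕ L}
    (hl : .inr l ∈ S) (h : (incGraph inc).Adj (.inr l) z) : z ∈ S := by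
  rcases h with ⟨p, l', hl', -, -⟩ | ⟨p, l', hl', rfl, hp⟩
  · cases hl'
  · cases hl'
    exact hS.2 l hl p hp

variable {n : ℕ} {S : Set (P ⊕ L)} {u v m : P ⊕ L}

lemma IsOvoidal.midpoint_mem (hpoly : IsGenPolygon (2 * n) inc) (hS : IsOvoidal inc n S)
    {k : ℕ} (hk : 0 < k) (hkn : k < n) (hconv : (incGraph inc).IsConvexBelow S (2 * k))
    (hu : u ∈ S) (hv : v ∈ S) (huv : δ u v = 2 * k) (hum : δ u m = k) (hmv : δ m v = k) :
    m ∈ S := by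
  have hc : (incGraph inc).Connected := hpoly.connected
  have hmu : δ m u = k := by rw [SimpleGraph.dist_comm, hum]
  obtain ⟨z₀, ⟨hz₀, hz₀min⟩, hz₀uniq⟩ := hS.2.2 m ⟨u, hu, by omega⟩
  have hjk : δ m z₀ ≤ k := hmu ▸ hz₀min u hu
  -- if `z₀` were at distance `k`, both `u` and `v` would be nearest to `m`, forcing `u = v`
  have hjlt : δ m z₀ < k := by
    by_contra hj
    have hu₀ : u = z₀ := hz₀uniq u ⟨hu, fun y hy => by have := hz₀min y hy; omega⟩
    have hv₀ : v = z₀ := hz₀uniq v ⟨hv, fun y hy => by have := hz₀min y hy; omega⟩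
    subst hu₀ hv₀
    rw [SimpleGraph.dist_self] at huv
    omega
  obtain hj0 | hjpos := Nat.eq_zero_or_pos (δ m z₀)
  · rwa [hc.dist_eq_zero_iff.mp hj0]
  obtain ⟨a, hma, ha⟩ := hc.exists_adj_dist_add_one_eq (hc.dist_eq_zero_iff.not.mp hjpos.ne')
  have beyond : ∀ w ∈ S, δ m w = k → ∀ b, (incGraph inc).Adj m b → δ b w + 1 = k → a ≠ b →
      m ∈ S := by
    intro w hw hmw b hmb hb hab
    have hwz₀ := hc.dist_eq_add_of_adj_ne hma hmb hab ha (hmw ▸ hb) (by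
      rw [hpoly.girth_eq]; omega)
    have hwm : δ w m = k := by rw [SimpleGraph.dist_comm, hmw]
    exact hconv w hw z₀ hz₀ (by omega) m (by omega)
  have hmne : ∀ w, δ m w = k → m ≠ w := fun w hw h => by subst h; rw [SimpleGraph.dist_self] at hw; omega
  obtain ⟨b₁, hmb₁, hb₁⟩ := hc.exists_adj_dist_add_one_eq (hmne u hmu)
  obtain ⟨b₂, hmb₂, hb₂⟩ := hc.exists_adj_dist_add_one_eq (hmne v hmv)
  have hb₁₂ : b₁ ≠ b₂ := by
    rintro rfl
    have := hc.dist_triangle (u := u) (v := b₁) (w := v)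
    have : δ u b₁ = δ b₁ u := SimpleGraph.dist_comm
    omega
  by_cases hab₁ : a = b₁
  · exact beyond v hv hmv b₂ hmb₂ (by omega) (hab₁ ▸ hb₁₂)
  · exact beyond u hu hmu b₁ hmb₁ (by omega) hab₁

lemma IsOvoidal.exists_mem_strictly_between (hpoly : IsGenPolygon (2 * n) inc)
    (hS : IsOvoidal inc n S) (hconv : (incGraph inc).IsConvexBelow S (δ u v))
    (hu : u ∈ S) (hv : v ∈ S) (h2 : 2 ≤ δ u v) (hlt : δ u v < 2 * n) :
    ∃ m ∈ S, δ u m + δ m v = δ u v ∧ 0 < δ u m ∧ δ u m < δ u v := by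
  have hc : (incGraph inc).Connected := hpoly.connected
  have huv : u ≠ v := fun h => by subst h; simp at h2
  rcases u with x | l
  · rcases v with y | l
    · obtain ⟨k, hk⟩ := even_dist_inl_inl (inc := inc) x y
      obtain ⟨m, hm, hmsum⟩ := hc.exists_dist_eq_of_le (u := .inl x) (v := .inl y)
        (i := k) (by omega)
      exact ⟨m, hS.midpoint_mem hpoly (by omega) (by omega) (hconv.mono (by omega)) hu hv
        (by omega) hm (by omega), hmsum, by omega, by omega⟩
    · obtain ⟨b, hvb, hb⟩ := hc.exists_adj_dist_add_one_eq huv.symm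
      have hvb1 := dist_eq_one_iff_adj.mpr hvb
      have htri := hc.dist_triangle (u := .inl x) (v := b) (w := .inr l)
      have : δ b (.inl x) = δ (.inl x) b := SimpleGraph.dist_comm
      have : δ (.inr l) (.inl x) = δ (.inl x) (.inr l) := SimpleGraph.dist_comm
      have : δ (.inr l) b = δ b (.inr l) := SimpleGraph.dist_comm
      exact ⟨b, hS.1.mem_of_adj_inr hv hvb, by omega, by omega, by omega⟩
  · obtain ⟨a, hua, ha⟩ := hc.exists_adj_dist_add_one_eq huv
    have hua1 := dist_eq_one_iff_adj.mpr hua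
    exact ⟨a, hS.1.mem_of_adj_inr hu hua, by omega, by omega, by omega⟩

lemma IsOvoidal.isConvexBelow_succ (hpoly : IsGenPolygon (2 * n) inc) (hS : IsOvoidal inc n S)
    {d : ℕ} (hd : d < 2 * n) (hconv : (incGraph inc).IsConvexBelow S d) :
    (incGraph inc).IsConvexBelow S (d + 1) := by
  intro u hu v hv huv z hz
  obtain hlt | rfl := Nat.lt_succ_iff_lt_or_eq.mp huv
  · exact hconv u hu v hv hlt z hz
  have hc : (incGraph inc).Connected := hpoly.connected
  obtain hz0 | hz0 := Nat.eq_zero_or_pos (δ u z)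
  · rwa [← hc.dist_eq_zero_iff.mp hz0]
  obtain hv0 | hv0 := Nat.eq_zero_or_pos (δ z v)
  · rwa [hc.dist_eq_zero_iff.mp hv0]
  obtain ⟨m, hmS, hm, hm0, hmd⟩ :=
    hS.exists_mem_strictly_between hpoly hconv hu hv (by omega) hd
  have hg : 2 * δ u v < (incGraph inc).girth := by rw [hpoly.girth_eq]; omega
  by_cases hzm : δ u z ≤ δ u m
  · exact hconv u hu m hmS (by omega) z (hc.dist_add_dist_eq_of_le hg hm hz hzm)
  · exact hconv m hmS v hv (by omega) z (hc.dist_add_dist_eq_of_ge hg hm hz (by omega))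

lemma IsOvoidal.isConvexBelow (hpoly : IsGenPolygon (2 * n) inc) (hS : IsOvoidal inc n S) :
    (incGraph inc).IsConvexBelow S (2 * n) := by
  suffices ∀ d ≤ 2 * n, (incGraph inc).IsConvexBelow S d from this _ le_rfl
  intro d
  induction d with
  | zero => exact fun _ _ _ _ _ huv => (Nat.not_lt_zero _ huv).elim
  | succ d ih => exact fun hd => hS.isConvexBelow_succ hpoly hd (ih (by omega))

end IncidenceGeometry

theorem ovoidal_geodesic_closed_general {P L : Type*} (n : ℕ)
    (inc : P → L → Prop) (hpoly : IsGenPolygon (2 * n) inc)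
    (S : Set (P ⊕ L)) (hS : IsOvoidal inc n S)
    (x y : P) (hx : Sum.inl x ∈ S) (hy : Sum.inl y ∈ S)
    (hxy : (incGraph inc).dist (Sum.inl x) (Sum.inl y) < 2 * n) :
    ∀ z : P ⊕ L,
      (incGraph inc).dist (Sum.inl x) z + (incGraph inc).dist z (Sum.inl y) =
        (incGraph inc).dist (Sum.inl x) (Sum.inl y) →
      z ∈ S :=
  hS.isConvexBelow hpoly _ hx _ hy hxy

/-- If `x` and `y` are points of an ovoidal subspace `S` of a generalised `2n`-gon with
`d(x, y) < 2n`, then every element on the unique geodesic joining `x` and `y` lies in `S`. -/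
theorem ovoidal_geodesic_closed {P L : Type*} (n : ℕ) (hn : 1 ≤ n)
    (inc : P → L → Prop) (hpoly : IsGenPolygon (2 * n) inc) (hthick : IsThick inc)
    (S : Set (P ⊕ L)) (hS : IsOvoidal inc n S)
    (x y : P) (hx : Sum.inl x ∈ S) (hy : Sum.inl y ∈ S)
    (hxy : (incGraph inc).dist (Sum.inl x) (Sum.inl y) < 2 * n) :
    ∀ z : P ⊕ L,
      (incGraph inc).dist (Sum.inl x) z + (incGraph inc).dist z (Sum.inl y) =
        (incGraph inc).dist (Sum.inl x) (Sum.inl y) →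
      z ∈ S :=
  ovoidal_geodesic_closed_general n inc hpoly S hS x y hx hy hxy
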